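/- For density matrices ρ, σ, the chain T ≤ √(1-F²) ≤ √(1-Q²) holds: ‖ρ-σ‖₁/2 ≤ √(1 - ‖ρ^{1/2}σ^{1/2}‖₁²) ≤ √(1 - Tr(ρ^{1/2}σ^{1/2})²). -/

import Mathlib

open Matrix
open scoped ComplexOrder

/-- The positive semidefinite square root of a positive semidefinite matrix
(the definition removed from Mathlib, restated verbatim). -/
noncomputable def Matrix.PosSemidef.sqrt {n 𝕜 : Type*} [Fintype n] [DecidableEq n] [RCLike 𝕜]
    {A : Matrix n n 𝕜} (hA : A.PosSemidef) : Matrix n n 𝕜 :=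
  hA.1.eigenvectorUnitary.1 * diagonal ((↑) ∘ (Real.sqrt ∘ hA.1.eigenvalues)) *
    (star hA.1.eigenvectorUnitary : Matrix n n 𝕜)

/-- Trace norm `‖X‖₁ = Tr √(XᴴX)`. -/
noncomputable def traceNorm {n : Type*} [Fintype n] [DecidableEq n] (X : Matrix n n ℂ) : ℝ :=
  ((Matrix.posSemidef_conjTranspose_mul_self X).sqrt.trace).re

/-- Fractional power `A^s` of a positive semidefinite matrix, defined spectrally with the
convention `0 ^ s = 0` for all real `s`. -/
noncomputable def Matrix.PosSemidef.rpow {n : Type*} [Fintype n] [DecidableEq n]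
    {A : Matrix n n ℂ} (hA : A.PosSemidef) (s : ℝ) : Matrix n n ℂ :=
  hA.1.cfc (fun x => if x = 0 then 0 else x ^ s)

/-- Matrix logarithm of a positive semidefinite matrix, defined spectrally with the
convention `log 0 = 0` on the kernel. -/
noncomputable def Matrix.PosSemidef.log {n : Type*} [Fintype n] [DecidableEq n]
    {A : Matrix n n ℂ} (hA : A.PosSemidef) : Matrix n n ℂ :=
  hA.1.cfc Real.log


namespace FvG

variable {n : Type*} [Fintype n] [DecidableEq n]

lemma cfc_def {A : Matrix n n ℂ} (hA : A.IsHermitian) (f : ℝ → ℝ) :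
    hA.cfc f = (hA.eigenvectorUnitary : Matrix n n ℂ) * diagonal (RCLike.ofReal ∘ f ∘ hA.eigenvalues)
      * star (hA.eigenvectorUnitary : Matrix n n ℂ) := rfl

section cfc
variable {A : Matrix n n ℂ} (hA : A.IsHermitian)

lemma cfc_mul (f g : ℝ → ℝ) :
    hA.cfc f * hA.cfc g = hA.cfc (fun x => f x * g x) := by
  simp only [cfc_def]
  have h1 : (star (hA.eigenvectorUnitary : Matrix n n ℂ)) * (hA.eigenvectorUnitary : Matrix n n ℂ) = 1 :=
    Unitary.star_mul_self_of_mem (hA.eigenvectorUnitary).2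
  have key : ∀ a b c d e f : Matrix n n ℂ, (a * b * c) * (d * e * f) = a * (b * (c * d) * e) * f := by
    intros; simp only [mul_assoc]
  rw [key, h1, mul_one, diagonal_mul_diagonal]
  have : (fun i => (RCLike.ofReal ∘ f ∘ hA.eigenvalues) i * (RCLike.ofReal ∘ g ∘ hA.eigenvalues) i)
      = (RCLike.ofReal ∘ (fun x => f x * g x) ∘ hA.eigenvalues : n → ℂ) := by
    funext i; simp
  rw [this]

lemma cfc_congr {f g : ℝ → ℝ} (h : ∀ i, f (hA.eigenvalues i) = g (hA.eigenvalues i)) :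
    hA.cfc f = hA.cfc g := by
  simp only [cfc_def]
  have : (RCLike.ofReal ∘ f ∘ hA.eigenvalues : n → ℂ) = RCLike.ofReal ∘ g ∘ hA.eigenvalues := by
    funext i; simp [h i]
  rw [this]

lemma cfc_sub (f g : ℝ → ℝ) :
    hA.cfc f - hA.cfc g = hA.cfc (fun x => f x - g x) := by
  simp only [cfc_def]
  rw [← sub_mul, ← mul_sub, diagonal_sub]
  have : (fun i => (RCLike.ofReal ∘ f ∘ hA.eigenvalues) i - (RCLike.ofReal ∘ g ∘ hA.eigenvalues) i)
      = (RCLike.ofReal ∘ (fun x => f x - g x) ∘ hA.eigenvalues : n → ℂ) := by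
    funext i; simp
  rw [this]

lemma cfc_id' : hA.cfc id = A := by
  simp only [cfc_def]
  exact hA.spectral_theorem.symm

lemma cfc_id'' : hA.cfc (fun x => x) = A := cfc_id' hA

lemma cfc_one' : hA.cfc (fun _ => 1) = 1 := by
  simp only [cfc_def]
  have h1 : (hA.eigenvectorUnitary : Matrix n n ℂ) * (star hA.eigenvectorUnitary : Matrix n n ℂ) = 1 :=
    Unitary.mul_star_self_of_mem (hA.eigenvectorUnitary).2
  have : (RCLike.ofReal ∘ (fun _ => (1:ℝ)) ∘ hA.eigenvalues : n → ℂ) = (fun _ => 1) := by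
    funext i; simp
  rw [this]
  rw [show (diagonal (fun _ => 1) : Matrix n n ℂ) = 1 from diagonal_one, mul_one, h1]

lemma cfc_zero' : hA.cfc (fun _ => 0) = 0 := by
  simp only [cfc_def]
  have : (RCLike.ofReal ∘ (fun _ => (0:ℝ)) ∘ hA.eigenvalues : n → ℂ) = (fun _ => 0) := by
    funext i; simp
  rw [this]
  rw [show (diagonal (fun _ => 0) : Matrix n n ℂ) = 0 from diagonal_zero, mul_zero, zero_mul]

lemma cfc_hermitian (f : ℝ → ℝ) : (hA.cfc f).IsHermitian := by
  simp only [cfc_def]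
  have hd : star (RCLike.ofReal ∘ f ∘ hA.eigenvalues : n → ℂ) = RCLike.ofReal ∘ f ∘ hA.eigenvalues := by
    funext i; simp
  have hd' : star (diagonal (Complex.ofReal ∘ f ∘ hA.eigenvalues) : Matrix n n ℂ)
      = diagonal (Complex.ofReal ∘ f ∘ hA.eigenvalues) := by
    have h2 : star (Complex.ofReal ∘ f ∘ hA.eigenvalues : n → ℂ)
        = Complex.ofReal ∘ f ∘ hA.eigenvalues := by
      funext i; simp
    rw [star_eq_conjTranspose, diagonal_conjTranspose, h2]
  simp [Matrix.IsHermitian, conjTranspose_mul, hd', mul_assoc, ← star_eq_conjTranspose]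

lemma cfc_posSemidef {f : ℝ → ℝ} (hf : ∀ x, 0 ≤ f x) : (hA.cfc f).PosSemidef := by
  simp only [cfc_def]
  rw [star_eq_conjTranspose]
  refine Matrix.PosSemidef.mul_mul_conjTranspose_same ?_ _
  refine posSemidef_diagonal_iff.mpr fun i => ?_
  exact Complex.zero_le_real.mpr (hf _)

lemma cfc_trace (f : ℝ → ℝ) :
    (hA.cfc f).trace = ∑ i, (f (hA.eigenvalues i) : ℂ) := by
  simp only [cfc_def]
  rw [trace_mul_cycle, Unitary.star_mul_self_of_mem (hA.eigenvectorUnitary).2, one_mul,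
    trace_diagonal]
  simp

end cfc

lemma _root_.Matrix.PosSemidef.posSemidef_sqrt {A : Matrix n n ℂ} (hA : A.PosSemidef) :
    hA.sqrt.PosSemidef :=
  cfc_posSemidef hA.1 (fun x => Real.sqrt_nonneg x)

lemma _root_.Matrix.PosSemidef.sqrt_mul_self {A : Matrix n n ℂ} (hA : A.PosSemidef) :
    hA.sqrt * hA.sqrt = A := by
  rw [show hA.sqrt = hA.1.cfc Real.sqrt from rfl, cfc_mul]
  exact (cfc_congr hA.1 fun i => Real.mul_self_sqrt (hA.eigenvalues_nonneg i)).trans (cfc_id'' hA.1)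

section sqrtUnique
open scoped MatrixOrder

lemma sqrt_eq_CFC {B : Matrix n n ℂ} (hB : B.PosSemidef) : hB.sqrt = CFC.sqrt B := by
  rw [CFC.sqrt_eq_real_sqrt B hB.nonneg, cfcₙ_eq_cfc, hB.1.cfc_eq]; rfl

lemma _root_.Matrix.PosSemidef.eq_sqrt_of_sq_eq {A : Matrix n n ℂ} (hA : A.PosSemidef)
    (B : Matrix n n ℂ) {hB : B.PosSemidef} (hAB : A ^ 2 = B) : A = hB.sqrt := by
  rw [sqrt_eq_CFC hB, eq_comm, CFC.sqrt_eq_iff B A hB.nonneg hA.nonneg, ← sq, hAB]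

end sqrtUnique

/-- Frobenius real inner product of matrices. -/
noncomputable def ip (X Y : Matrix n n ℂ) : ℝ := ((X * Yᴴ).trace).re

/-- Vectorization into Euclidean space. -/
noncomputable def vec (X : Matrix n n ℂ) : EuclideanSpace ℂ (n × n) :=
  WithLp.toLp 2 (fun p : n × n => X p.1 p.2)

lemma trace_eq_inner (X Y : Matrix n n ℂ) :
    (X * Yᴴ).trace = inner (𝕜 := ℂ) (vec Y) (vec X) := by
  rw [PiLp.inner_apply]
  rw [Matrix.trace, Fintype.sum_prod_type]
  simp only [Matrix.diag_apply, Matrix.mul_apply, conjTranspose_apply]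
  refine Finset.sum_congr rfl fun i _ => Finset.sum_congr rfl fun j _ => ?_
  simp [vec, RCLike.inner_apply, mul_comm]

lemma ip_self_eq (X : Matrix n n ℂ) : ip X X = ∑ p : n × n, ‖X p.1 p.2‖ ^ 2 := by
  rw [ip, trace_eq_inner]
  rw [PiLp.inner_apply, Complex.re_sum]
  refine Finset.sum_congr rfl fun p _ => ?_
  rw [RCLike.inner_apply]
  rw [show (vec X).ofLp p * (starRingEnd ℂ) ((vec X).ofLp p) = ((Complex.normSq ((vec X).ofLp p) : ℂ)) by
    rw [Complex.mul_conj]]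
  simp only [Complex.ofReal_re, ← Complex.sq_norm]
  rfl

lemma ip_self_nonneg (X : Matrix n n ℂ) : 0 ≤ ip X X := by
  rw [ip_self_eq]; positivity

lemma norm_vec (X : Matrix n n ℂ) : ‖vec X‖ = Real.sqrt (ip X X) := by
  rw [EuclideanSpace.norm_eq, ip_self_eq]
  congr 1

lemma ip_cauchy_schwarz (X Y : Matrix n n ℂ) :
    |ip X Y| ≤ Real.sqrt (ip X X) * Real.sqrt (ip Y Y) := by
  rw [ip, trace_eq_inner]
  calc |(inner (𝕜 := ℂ) (vec Y) (vec X)).re| ≤ ‖inner (𝕜 := ℂ) (vec Y) (vec X)‖ := by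
        exact Complex.abs_re_le_norm _
    _ ≤ ‖vec Y‖ * ‖vec X‖ := norm_inner_le_norm _ _
    _ = Real.sqrt (ip X X) * Real.sqrt (ip Y Y) := by rw [norm_vec, norm_vec, mul_comm]

lemma eq_zero_of_ip_self_eq_zero {X : Matrix n n ℂ} (h : ip X X = 0) : X = 0 := by
  rw [ip_self_eq] at h
  ext i j
  have := (Finset.sum_eq_zero_iff_of_nonneg (fun p _ => by positivity)).mp h (i, j) (Finset.mem_univ _)
  simpa using this

lemma re_trace_nonneg {A : Matrix n n ℂ} (hA : A.PosSemidef) : 0 ≤ A.trace.re := by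
  rw [Matrix.trace, Complex.re_sum]
  refine Finset.sum_nonneg fun i _ => ?_
  have h := hA.diag_nonneg (i := i)
  exact (Complex.le_def.mp h).1.trans_eq' (by simp)


section traceNorm

lemma sqrt_eq_cfc {A : Matrix n n ℂ} (hA : A.PosSemidef) : hA.sqrt = hA.1.cfc Real.sqrt := rfl

lemma traceNorm_eq_cfc (X : Matrix n n ℂ) :
    traceNorm X = (((Matrix.posSemidef_conjTranspose_mul_self X).1.cfc Real.sqrt).trace).re := by
  rw [traceNorm, sqrt_eq_cfc]

lemma traceNorm_nonneg (X : Matrix n n ℂ) : 0 ≤ traceNorm X :=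
  re_trace_nonneg (Matrix.posSemidef_conjTranspose_mul_self X).posSemidef_sqrt

/-- The sign function. -/
noncomputable def sgn (x : ℝ) : ℝ := if x < 0 then -1 else 1

lemma sgn_mul_self (x : ℝ) : sgn x * sgn x = 1 := by
  unfold sgn; split <;> norm_num

lemma sgn_mul_id (x : ℝ) : sgn x * x = |x| := by
  unfold sgn
  rcases lt_or_ge x 0 with h | h
  · rw [if_pos h, abs_of_neg h]; ring
  · rw [if_neg (not_lt.mpr h), abs_of_nonneg h]; ring

/-- For a Hermitian `D`, the trace norm is `Re Tr (W * D)` with `W = sgn(D)`. -/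
lemma traceNorm_hermitian {D : Matrix n n ℂ} (hD : D.IsHermitian) :
    traceNorm D = ((hD.cfc sgn * D).trace).re := by
  have habs : (hD.cfc (fun x => |x|)) ^ 2 = Dᴴ * D := by
    rw [pow_two, cfc_mul]
    have : (fun x => |x| * |x|) = fun x : ℝ => x * x := by
      funext x; exact abs_mul_abs_self x
    rw [this, ← cfc_mul, cfc_id'' hD, hD.eq]
  have hsqrt : hD.cfc (fun x => |x|) = (Matrix.posSemidef_conjTranspose_mul_self D).sqrt :=
    Matrix.PosSemidef.eq_sqrt_of_sq_eq (cfc_posSemidef hD (fun x => abs_nonneg x)) _ habs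
  have hW : hD.cfc sgn * D = hD.cfc (fun x => |x|) := by
    have h1 : hD.cfc sgn * hD.cfc (fun x => x) = hD.cfc (fun x => |x|) := by
      rw [cfc_mul, show (fun x : ℝ => sgn x * x) = fun x => |x| from funext sgn_mul_id]
    rwa [cfc_id'' hD] at h1
  rw [traceNorm, ← hsqrt, hW]

end traceNorm

section polar

variable (X : Matrix n n ℂ)

/-- Pseudo-inverse of the square root of `XᴴX`. -/
noncomputable def pinv : Matrix n n ℂ :=
  (Matrix.posSemidef_conjTranspose_mul_self X).1.cfc (fun x => if x = 0 then 0 else (Real.sqrt x)⁻¹)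

/-- Partial isometry in the polar decomposition of `X`. -/
noncomputable def pisom : Matrix n n ℂ := X * pinv X

/-- Indicator of the support. -/
noncomputable def chi (x : ℝ) : ℝ := if x = 0 then 0 else 1

/-- Support projection of `XᴴX`. -/
noncomputable def suppProj : Matrix n n ℂ :=
  (Matrix.posSemidef_conjTranspose_mul_self X).1.cfc chi

/-- Fourth root of `XᴴX`. -/
noncomputable def froot : Matrix n n ℂ :=
  (Matrix.posSemidef_conjTranspose_mul_self X).1.cfc (fun x => Real.sqrt (Real.sqrt x))

lemma pinv_conjT : (pinv X)ᴴ = pinv X := by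
  rw [pinv]; exact (cfc_hermitian _ _).eq

lemma froot_conjT : (froot X)ᴴ = froot X := by
  rw [froot]; exact (cfc_hermitian _ _).eq

lemma supp_conjT : (suppProj X)ᴴ = suppProj X := by
  rw [suppProj]; exact (cfc_hermitian _ _).eq

lemma cfc_id_eq (hA : (Xᴴ * X).IsHermitian) :
    Xᴴ * X * hA.cfc (fun x => if x = 0 then 0 else (Real.sqrt x)⁻¹)
      = hA.cfc (fun x => x * (if x = 0 then 0 else (Real.sqrt x)⁻¹)) := by
  have h2 := cfc_mul hA (fun x => x) (fun x => if x = 0 then 0 else (Real.sqrt x)⁻¹)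
  rwa [cfc_id'' hA] at h2

lemma cfc_congr_nonneg {f g : ℝ → ℝ} (hfg : ∀ x, 0 ≤ x → f x = g x) :
    (Matrix.posSemidef_conjTranspose_mul_self X).1.cfc f
      = (Matrix.posSemidef_conjTranspose_mul_self X).1.cfc g :=
  cfc_congr _ fun i => hfg _ ((Matrix.posSemidef_conjTranspose_mul_self X).eigenvalues_nonneg i)

lemma conjT_pisom_mul_pisom : (pisom X)ᴴ * pisom X = suppProj X := by
  set h := (Matrix.posSemidef_conjTranspose_mul_self X).1
  rw [pisom, conjTranspose_mul, pinv_conjT]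
  calc pinv X * Xᴴ * (X * pinv X) = pinv X * (Xᴴ * X) * pinv X := by
        simp only [mul_assoc]
    _ = suppProj X := by
        rw [pinv, mul_assoc, cfc_id_eq X h, cfc_mul]
        refine cfc_congr_nonneg X fun x hx => ?_
        rcases eq_or_lt_of_le hx with h0 | h0
        · simp [chi, ← h0]
        · have hs : Real.sqrt x ≠ 0 := ne_of_gt (Real.sqrt_pos.mpr h0)
          have hx0 : x ≠ 0 := ne_of_gt h0
          simp only [chi, if_neg hx0]
          field_simp
          exact (Real.sq_sqrt hx).symm

lemma pisom_mul_supp : pisom X * suppProj X = pisom X := by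
  set h := (Matrix.posSemidef_conjTranspose_mul_self X).1
  rw [pisom, suppProj, pinv, mul_assoc, cfc_mul]
  congr 1
  refine cfc_congr _ fun i => ?_
  by_cases hx : h.eigenvalues i = 0 <;> simp [chi, hx]

lemma mul_supp_self : X * suppProj X = X := by
  set h := (Matrix.posSemidef_conjTranspose_mul_self X).1 with hh
  have h1P : (1 : Matrix n n ℂ) - suppProj X = h.cfc (fun x => 1 - chi x) := by
    rw [← cfc_one' h, suppProj, cfc_sub]
  set E := X * ((1 : Matrix n n ℂ) - suppProj X) with hE
  have hEzero : E = 0 := by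
    apply eq_zero_of_ip_self_eq_zero
    have hEH : Eᴴ = h.cfc (fun x => 1 - chi x) * Xᴴ := by
      rw [hE, h1P, conjTranspose_mul, (cfc_hermitian h _).eq]
    have : E * Eᴴ = X * (h.cfc (fun x => 1 - chi x) * h.cfc (fun x => 1 - chi x)) * Xᴴ := by
      rw [hE, hEH, h1P]
      simp only [mul_assoc]
    rw [ip, this, cfc_mul]
    have hidem : (h.cfc fun x => (1 - chi x) * (1 - chi x)) = h.cfc (fun x => 1 - chi x) := by
      refine cfc_congr _ fun i => ?_
      by_cases hx : h.eigenvalues i = 0 <;> simp [chi, hx]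
    rw [hidem, trace_mul_cycle]
    have h2 := cfc_mul h (fun x => x) (fun x => 1 - chi x)
    rw [cfc_id'' h] at h2
    rw [h2]
    have h3 : (h.cfc fun x => x * (1 - chi x)) = h.cfc (fun _ => 0) :=
      cfc_congr _ fun i => by by_cases hx : h.eigenvalues i = 0 <;> simp [chi, hx]
    rw [h3, cfc_zero']
    simp
  rw [hE, mul_sub, mul_one] at hEzero
  exact (sub_eq_zero.mp hEzero).symm

lemma froot_mul_froot :
    froot X * froot X = (Matrix.posSemidef_conjTranspose_mul_self X).1.cfc Real.sqrt := by
  rw [froot, cfc_mul]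
  exact cfc_congr _ fun i => Real.mul_self_sqrt (Real.sqrt_nonneg _)

lemma ip_froot_self : ip (froot X) (froot X) = traceNorm X := by
  rw [ip, froot_conjT, froot_mul_froot, traceNorm_eq_cfc]

lemma ip_pisom_froot_self : ip (pisom X * froot X) (pisom X * froot X) = traceNorm X := by
  set h := (Matrix.posSemidef_conjTranspose_mul_self X).1
  rw [ip, trace_mul_comm, conjTranspose_mul, froot_conjT]
  have : froot X * (pisom X)ᴴ * (pisom X * froot X) = froot X * suppProj X * froot X := by
    rw [mul_assoc, mul_assoc, ← mul_assoc (pisom X)ᴴ, conjT_pisom_mul_pisom, ← mul_assoc]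
  rw [this]
  have : froot X * suppProj X * froot X = h.cfc Real.sqrt := by
    rw [froot, suppProj, cfc_mul, cfc_mul]
    refine cfc_congr_nonneg X fun x hx => ?_
    by_cases hx0 : x = 0
    · simp [chi, hx0]
    · simp only [chi, if_neg hx0, mul_one]
      exact Real.mul_self_sqrt (Real.sqrt_nonneg x)
  rw [this, traceNorm_eq_cfc]

lemma supp_eq_pinv_mul_sqrt :
    pinv X * (Matrix.posSemidef_conjTranspose_mul_self X).1.cfc Real.sqrt = suppProj X := by
  set h := (Matrix.posSemidef_conjTranspose_mul_self X).1
  rw [pinv, suppProj, cfc_mul]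
  refine cfc_congr_nonneg X fun x hx => ?_
  by_cases hx0 : x = 0
  · simp [chi, hx0]
  · have hs : Real.sqrt x ≠ 0 := by
      refine ne_of_gt (Real.sqrt_pos.mpr (lt_of_le_of_ne hx (Ne.symm hx0)))
    simp [chi, hx0, inv_mul_cancel₀ hs]

lemma re_trace_eq_ip_pisom_froot : X.trace.re = ip (pisom X * froot X) (froot X) := by
  set h := (Matrix.posSemidef_conjTranspose_mul_self X).1
  rw [ip, froot_conjT]
  congr 2
  calc X = X * suppProj X := (mul_supp_self X).symm
    _ = X * (pinv X * h.cfc Real.sqrt) := by rw [supp_eq_pinv_mul_sqrt]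
    _ = X * (pinv X * (froot X * froot X)) := by rw [froot_mul_froot]
    _ = pisom X * froot X * froot X := by rw [pisom]; simp only [mul_assoc]

lemma abs_re_trace_le_traceNorm : |X.trace.re| ≤ traceNorm X := by
  rw [re_trace_eq_ip_pisom_froot]
  calc |ip (pisom X * froot X) (froot X)|
      ≤ Real.sqrt (ip (pisom X * froot X) (pisom X * froot X)) * Real.sqrt (ip (froot X) (froot X)) :=
        ip_cauchy_schwarz _ _
    _ = traceNorm X := by
        rw [ip_pisom_froot_self, ip_froot_self,
          Real.mul_self_sqrt (traceNorm_nonneg X)]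

lemma re_trace_conjT_mul_pisom : (Xᴴ * pisom X).trace.re = traceNorm X := by
  set h := (Matrix.posSemidef_conjTranspose_mul_self X).1
  have : Xᴴ * pisom X = h.cfc Real.sqrt := by
    rw [pisom, pinv, ← mul_assoc, cfc_id_eq X h]
    refine cfc_congr_nonneg X fun x hx => ?_
    by_cases hx0 : x = 0
    · simp [hx0]
    · simp only [if_neg hx0]
      have hs : Real.sqrt x ≠ 0 :=
        ne_of_gt (Real.sqrt_pos.mpr (lt_of_le_of_ne hx (Ne.symm hx0)))
      field_simp
      exact (Real.sq_sqrt hx).symm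
  rw [this, traceNorm_eq_cfc]

lemma psd_one_sub_pisom_mul_conjT : ((1 : Matrix n n ℂ) - pisom X * (pisom X)ᴴ).PosSemidef := by
  set V := pisom X
  have hherm : (V * Vᴴ)ᴴ = V * Vᴴ := by rw [conjTranspose_mul, conjTranspose_conjTranspose]
  have hidem : (V * Vᴴ) * (V * Vᴴ) = V * Vᴴ := by
    calc (V * Vᴴ) * (V * Vᴴ) = V * (Vᴴ * V) * Vᴴ := by simp only [mul_assoc]
      _ = V * suppProj X * Vᴴ := by rw [conjT_pisom_mul_pisom]
      _ = V * Vᴴ := by rw [pisom_mul_supp]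
  have key : ((1 : Matrix n n ℂ) - V * Vᴴ)ᴴ * ((1 : Matrix n n ℂ) - V * Vᴴ)
      = (1 : Matrix n n ℂ) - V * Vᴴ := by
    rw [conjTranspose_sub, conjTranspose_one, hherm]
    rw [mul_sub, sub_mul, sub_mul, mul_one, mul_one, one_mul, hidem]
    abel
  have := Matrix.posSemidef_conjTranspose_mul_self ((1 : Matrix n n ℂ) - V * Vᴴ)
  rwa [key] at this

end polar

lemma real_key {F t : ℝ} (hF : 0 ≤ F) (hFt : F ^ 2 ≤ t) (ht : t ≤ 1) :
    Real.sqrt (1 + t - 2 * F) * Real.sqrt (1 + t + 2 * F) + (1 - t)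
      ≤ 2 * Real.sqrt (1 - F ^ 2) := by
  have ht0 : 0 ≤ t := le_trans (sq_nonneg F) hFt
  have hF1 : F ≤ 1 := by nlinarith
  have hFsq : (0:ℝ) ≤ 1 - F ^ 2 := by nlinarith
  set u := Real.sqrt (1 - F ^ 2) with hu
  have hu2 : u ^ 2 = 1 - F ^ 2 := Real.sq_sqrt hFsq
  have hu0 : 0 ≤ u := Real.sqrt_nonneg _
  have hu1 : u ≤ 1 := by nlinarith
  have hul : 1 - t ≤ u := by nlinarith
  have ha : (0:ℝ) ≤ 1 + t - 2 * F := by nlinarith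
  rw [← Real.sqrt_mul ha]
  have hc0 : (0:ℝ) ≤ 2 * u - (1 - t) := by linarith
  have hsq : (1 + t - 2 * F) * (1 + t + 2 * F) ≤ (2 * u - (1 - t)) ^ 2 := by
    nlinarith [mul_nonneg (by linarith : (0:ℝ) ≤ 1 - t) (by linarith : (0:ℝ) ≤ 1 - u)]
  have := Real.sqrt_le_sqrt hsq
  rw [Real.sqrt_sq hc0] at this
  linarith

end FvG

open FvG in
/-- The valid chain `T ≤ √(1-F²) ≤ √(1-Q²)` for density matrices `ρ`, `σ`. -/
theorem stmt17 {n : Type*} [Fintype n] [DecidableEq n]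
    {ρ σ : Matrix n n ℂ} (hρ : ρ.PosSemidef) (hσ : σ.PosSemidef)
    (hρ1 : ρ.trace = 1) (hσ1 : σ.trace = 1) :
    traceNorm (ρ - σ) / 2 ≤ Real.sqrt (1 - (traceNorm (hρ.sqrt * hσ.sqrt)) ^ 2) ∧
    Real.sqrt (1 - (traceNorm (hρ.sqrt * hσ.sqrt)) ^ 2)
      ≤ Real.sqrt (1 - (((hρ.sqrt * hσ.sqrt).trace).re) ^ 2) := by
  have hρsH : hρ.sqrtᴴ = hρ.sqrt := hρ.posSemidef_sqrt.1.eq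
  have hσsH : hσ.sqrtᴴ = hσ.sqrt := hσ.posSemidef_sqrt.1.eq
  set B : Matrix n n ℂ := hρ.sqrt * hσ.sqrt with hBdef
  set F : ℝ := traceNorm B with hFdef
  have hF0 : 0 ≤ F := traceNorm_nonneg B
  constructor
  · -- Part 1 : T ≤ √(1 - F²)
    set V : Matrix n n ℂ := pisom B with hVdef
    set M : Matrix n n ℂ := hρ.sqrt * V with hMdef
    set N : Matrix n n ℂ := hσ.sqrt with hNdef
    set t : ℝ := ip M M with htdef
    have ht0 : 0 ≤ t := ip_self_nonneg M
    -- N Nᴴ = σ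
    have hNN : N * Nᴴ = σ := by rw [hNdef, hσsH, hσ.sqrt_mul_self]
    have hNNtr : ip N N = 1 := by
      rw [ip, hNN, hσ1]; simp
    -- R = ρ - M Mᴴ is psd
    have hMM : M * Mᴴ = hρ.sqrt * (V * Vᴴ) * hρ.sqrt := by
      rw [hMdef, conjTranspose_mul, hρsH]
      simp only [mul_assoc]
    set R : Matrix n n ℂ := ρ - M * Mᴴ with hRdef
    have hR : R.PosSemidef := by
      have h1 := (psd_one_sub_pisom_mul_conjT B).mul_mul_conjTranspose_same hρ.sqrt
      have h2 : hρ.sqrt * (1 - V * Vᴴ) * hρ.sqrtᴴ = R := by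
        rw [hρsH, mul_sub, sub_mul, mul_one, hRdef, hρ.sqrt_mul_self, hMM]
      rwa [h2] at h1
    -- trace bookkeeping
    have hRtr : (R.trace).re = 1 - t := by
      rw [hRdef, trace_sub, Complex.sub_re, hρ1]
      simp [htdef, ip]
    have ht1 : t ≤ 1 := by
      have := re_trace_nonneg hR
      rw [hRtr] at this
      linarith
    -- cross term
    have hMN : ip M N = F := by
      have h1 : M * Nᴴ = hρ.sqrt * V * hσ.sqrt := by rw [hMdef, hNdef, hσsH]
      have h2 : (hρ.sqrt * V * hσ.sqrt).trace = (hσ.sqrt * hρ.sqrt * V).trace :=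
        trace_mul_cycle hρ.sqrt V hσ.sqrt
      have h3 : hσ.sqrt * hρ.sqrt = Bᴴ := by
        rw [hBdef, conjTranspose_mul, hρsH, hσsH]
      rw [ip, h1, h2, h3, hFdef]
      exact re_trace_conjT_mul_pisom B
    have hFt : F ^ 2 ≤ t := by
      have h1 : ip M N ≤ |ip M N| := le_abs_self _
      have h2 := ip_cauchy_schwarz M N
      rw [hMN, hNNtr] at *
      have h3 : F ≤ Real.sqrt t := by
        calc F ≤ |F| := le_abs_self F
          _ ≤ Real.sqrt (ip M M) * Real.sqrt 1 := h2
          _ = Real.sqrt t := by simp [htdef]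
      nlinarith [Real.sq_sqrt ht0, Real.sqrt_nonneg t]
    -- the Hermitian sign matrix
    have hD : (ρ - σ).IsHermitian := hρ.1.sub hσ.1
    set W : Matrix n n ℂ := hD.cfc sgn with hWdef
    have hWW : W * W = 1 := by
      rw [hWdef, FvG.cfc_mul, show (fun x => sgn x * sgn x) = fun _ : ℝ => (1:ℝ) from
        funext sgn_mul_self, FvG.cfc_one']
    have hWH : Wᴴ = W := (cfc_hermitian hD sgn).eq
    -- decomposition
    set C : Matrix n n ℂ := M - N with hCdef
    set E : Matrix n n ℂ := M + N with hEdef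
    have hsplit : ((W * (ρ - σ)).trace).re
        = ((W * (M * Mᴴ - N * Nᴴ)).trace).re + ((W * R).trace).re := by
      have : ρ - σ = (M * Mᴴ - N * Nᴴ) + R := by rw [hNN, hRdef]; abel
      rw [this, mul_add, trace_add, Complex.add_re]
    -- bound the R part
    have hWR : ((W * R).trace).re ≤ 1 - t := by
      have h1W : ((1 : Matrix n n ℂ) - W).PosSemidef := by
        have : (1 : Matrix n n ℂ) - W = hD.cfc (fun x => 1 - sgn x) := by
          rw [hWdef, ← FvG.cfc_one' hD, FvG.cfc_sub]
        rw [this]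
        refine FvG.cfc_posSemidef hD fun x => ?_
        unfold sgn; split <;> norm_num
      have hpsd : (hR.sqrt * ((1 : Matrix n n ℂ) - W) * hR.sqrt).PosSemidef := by
        have := h1W.conjTranspose_mul_mul_same hR.sqrt
        rwa [hR.posSemidef_sqrt.1.eq] at this
      have htr : (hR.sqrt * ((1 : Matrix n n ℂ) - W) * hR.sqrt).trace
          = (((1 : Matrix n n ℂ) - W) * R).trace := by
        rw [trace_mul_cycle, hR.sqrt_mul_self, trace_mul_comm]
      have h2 := re_trace_nonneg hpsd
      rw [htr, sub_mul, one_mul, trace_sub, Complex.sub_re] at h2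
      rw [← hRtr]
      linarith
    -- bound the main part by Cauchy-Schwarz
    have hCE : C * Eᴴ + E * Cᴴ = (M * Mᴴ - N * Nᴴ) + (M * Mᴴ - N * Nᴴ) := by
      rw [hCdef, hEdef, conjTranspose_sub, conjTranspose_add]
      noncomm_ring
    have hswap : ((W * (E * Cᴴ)).trace).re = ((W * (C * Eᴴ)).trace).re := by
      have h1 : (W * (E * Cᴴ))ᴴ = C * Eᴴ * W := by
        rw [conjTranspose_mul, conjTranspose_mul, conjTranspose_conjTranspose, hWH,
          mul_assoc]
      have h2 : ((W * (E * Cᴴ))ᴴ).trace = star ((W * (E * Cᴴ)).trace) :=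
        trace_conjTranspose _
      have h3 : (C * Eᴴ * W).trace = (W * (C * Eᴴ)).trace := trace_mul_comm _ _
      have h4 := congrArg Complex.re (h1 ▸ h2)
      rw [h3] at h4
      simpa [Complex.conj_re] using h4.symm
    have hmain : ((W * (M * Mᴴ - N * Nᴴ)).trace).re = ((W * (C * Eᴴ)).trace).re := by
      have h1 : W * (C * Eᴴ) + W * (E * Cᴴ)
          = W * (M * Mᴴ - N * Nᴴ) + W * (M * Mᴴ - N * Nᴴ) := by
        rw [← mul_add, hCE, mul_add]
      have h2 := congrArg (fun Z : Matrix n n ℂ => (Z.trace).re) h1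
      simp only [trace_add, Complex.add_re] at h2
      rw [hswap] at h2
      linarith
    have hWCWC : ip (W * C) (W * C) = ip C C := by
      rw [ip, ip, conjTranspose_mul, hWH]
      have : W * C * (Cᴴ * W) = W * (C * Cᴴ) * W := by simp only [mul_assoc]
      rw [this, trace_mul_comm, ← mul_assoc, hWW, one_mul]
    have hCS : ((W * (C * Eᴴ)).trace).re ≤ Real.sqrt (ip C C) * Real.sqrt (ip E E) := by
      have h1 : W * (C * Eᴴ) = (W * C) * Eᴴ := by rw [mul_assoc]
      calc ((W * (C * Eᴴ)).trace).re = ip (W * C) E := by rw [ip, h1]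
        _ ≤ |ip (W * C) E| := le_abs_self _
        _ ≤ Real.sqrt (ip (W * C) (W * C)) * Real.sqrt (ip E E) := ip_cauchy_schwarz _ _
        _ = Real.sqrt (ip C C) * Real.sqrt (ip E E) := by rw [hWCWC]
    -- compute ip C C and ip E E
    have hNM : ((N * Mᴴ).trace).re = ((M * Nᴴ).trace).re := by
      have h1 : (M * Nᴴ)ᴴ = N * Mᴴ := by
        rw [conjTranspose_mul, conjTranspose_conjTranspose]
      have h2 := trace_conjTranspose (M * Nᴴ)
      rw [h1] at h2
      rw [h2]
      simp [Complex.conj_re]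
    have hCC : ip C C = 1 + t - 2 * F := by
      have hexp : C * Cᴴ = M * Mᴴ - M * Nᴴ - N * Mᴴ + N * Nᴴ := by
        rw [hCdef, conjTranspose_sub]; noncomm_ring
      rw [ip, hexp, trace_add, trace_sub, trace_sub, Complex.add_re, Complex.sub_re,
        Complex.sub_re]
      have e1 : ((M * Mᴴ).trace).re = t := rfl
      have e2 : ((M * Nᴴ).trace).re = F := hMN
      have e4 : ((N * Nᴴ).trace).re = 1 := hNNtr
      rw [e1, e2, hNM, e2, e4]
      ring
    have hEE : ip E E = 1 + t + 2 * F := by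
      have hexp : E * Eᴴ = M * Mᴴ + M * Nᴴ + N * Mᴴ + N * Nᴴ := by
        rw [hEdef, conjTranspose_add]; noncomm_ring
      rw [ip, hexp, trace_add, trace_add, trace_add, Complex.add_re, Complex.add_re,
        Complex.add_re]
      have e1 : ((M * Mᴴ).trace).re = t := rfl
      have e2 : ((M * Nᴴ).trace).re = F := hMN
      have e4 : ((N * Nᴴ).trace).re = 1 := hNNtr
      rw [e1, e2, hNM, e2, e4]
      ring
    -- put it together
    have hfinal : traceNorm (ρ - σ) ≤ 2 * Real.sqrt (1 - F ^ 2) := by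
      rw [traceNorm_hermitian hD]
      calc ((hD.cfc sgn * (ρ - σ)).trace).re
          = ((W * (M * Mᴴ - N * Nᴴ)).trace).re + ((W * R).trace).re := hsplit
        _ ≤ Real.sqrt (ip C C) * Real.sqrt (ip E E) + (1 - t) := by
            have := hmain.trans_le hCS
            linarith
        _ = Real.sqrt (1 + t - 2 * F) * Real.sqrt (1 + t + 2 * F) + (1 - t) := by
            rw [hCC, hEE]
        _ ≤ 2 * Real.sqrt (1 - F ^ 2) := real_key hF0 hFt ht1
    linarith
  · -- Part 2 : √(1 - F²) ≤ √(1 - Q²)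
    have hQF : |(B.trace).re| ≤ F := abs_re_trace_le_traceNorm B
    refine Real.sqrt_le_sqrt ?_
    have := sq_abs ((B.trace).re)
    nlinarith [abs_nonneg ((B.trace).re)]
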